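/- Let {x_k}, {y_k}, {z_k} be sequences generated by Nesterov's accelerated mirror descent: z_{k+1} = z_k − ((k+1)σs/2)∇f(x_k); y_{k+1} = argmin_{y ∈ C} { s⟨∇f(x_k), y⟩ + (1/2)‖y − x_k‖² }; x_{k+1} = ((k+1)/(k+3)) y_{k+1} + (2/(k+3)) ∇φ*(z_{k+1}), with x₀ = y₀ = ∇φ*(z₀). Define E(k) = k(k+1)σs[f(y_k) − f(x*)] + 4 D_{φ*}(z_k, z*). Then for every k ≥ 0 and every s > 0, E(k+1) − E(k) ≤ −((k+1)(k+2)(1 − Ls)σ/2) ‖y_{k+1} − x_k‖². -/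

import Mathlib

open Set Filter Topology
open scoped RealInnerProductSpace

/-- The Fenchel conjugate of a function over a constraint set `C`. -/
noncomputable def fenchelConjOn {n : ℕ} (C : Set (EuclideanSpace ℝ (Fin n)))
    (φ : EuclideanSpace ℝ (Fin n) → ℝ) (z : EuclideanSpace ℝ (Fin n)) : ℝ :=
  ⨆ x : C, (⟪z, (x : EuclideanSpace ℝ (Fin n))⟫ - φ x)

/-!
Bound `f (y (k + 1))` by the descent lemma, and `f (y k)` and `f x*` from below by the tangent
plane of `f` at `x k`. Since `x k = (k • y k + 2 • ∇φ*(z k)) / (k + 2)`, testing the optimality of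
`y (k + 1)` at the same combination with `∇φ*(z (k + 1))` in place of `∇φ*(z k)` turns all the
gradient terms into `-‖y (k + 1) - x k‖²` and a cross term with `∇φ*(z (k + 1)) - ∇φ*(z k)`. The
Bregman term contributes `-2σ‖∇φ*(z (k + 1)) - ∇φ*(z k)‖²`, which absorbs the cross term by Young's
inequality.

That contribution is `D_{φ*}(z, w) ≥ σ/2 ‖∇φ*(z) - ∇φ*(w)‖²`. It holds because `∇φ*(u)` is the
limit of every maximizing sequence of the `σ`-strongly concave function `x ↦ ⟪u, x⟫ - φ x` on `C`:
such sequences are Cauchy and their limit is a subgradient of `φ*` at `u`. In particular no lower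
semicontinuity of `φ` is needed.
-/

variable {E : Type*} [NormedAddCommGroup E] [InnerProductSpace ℝ E]

lemma exists_seq_tendsto_of_isLUB_image {α : Type*} {h : α → ℝ} {C : Set α} {M : ℝ}
    (hM : IsLUB (h '' C) M) (hC : C.Nonempty) :
    ∃ v : ℕ → α, (∀ m, v m ∈ C) ∧ Tendsto (fun m => h (v m)) atTop (𝓝 M) := by
  obtain ⟨r, -, -, hr, hrC⟩ := hM.exists_seq_monotone_tendsto (hC.image h)
  choose v hvC hv using hrC
  exact ⟨v, hvC, by simpa [hv] using hr⟩

section StrongConcave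

variable {C : Set E} {σ M : ℝ} {h : E → ℝ}

lemma StrongConcaveOn.mul_sq_norm_sub_le (hh : StrongConcaveOn C σ h) (hM : ∀ x ∈ C, h x ≤ M)
    {x y : E} (hx : x ∈ C) (hy : y ∈ C) :
    σ / 4 * ‖x - y‖ ^ 2 ≤ (M - h x) + (M - h y) := by
  have hhalf : (0 : ℝ) ≤ 1 / 2 := one_half_pos.le
  have hmid := hh.2 hx hy hhalf hhalf (add_halves 1)
  have hle := hM _ (hh.1 hx hy hhalf hhalf (add_halves 1))
  simp only [smul_eq_mul] at hmid
  linarith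

lemma StrongConcaveOn.cauchySeq_of_tendsto (hh : StrongConcaveOn C σ h) (hσ : 0 < σ)
    (hM : ∀ x ∈ C, h x ≤ M) {v : ℕ → E} (hv : ∀ m, v m ∈ C)
    (hlim : Tendsto (fun m => h (v m)) atTop (𝓝 M)) : CauchySeq v := by
  rw [Metric.cauchySeq_iff]
  intro ε hε
  have hgap : M - σ * ε ^ 2 / 8 < M := by have := mul_pos hσ (pow_pos hε 2); linarith
  obtain ⟨N, hN⟩ := eventually_atTop.1 <| hlim.eventually (lt_mem_nhds hgap)
  refine ⟨N, fun m hm l hl => ?_⟩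
  have hsq : σ * ‖v m - v l‖ ^ 2 < σ * ε ^ 2 := by
    linarith [hh.mul_sq_norm_sub_le hM (hv m) (hv l), hN m hm, hN l hl]
  rw [dist_eq_norm]
  exact lt_of_pow_lt_pow_left₀ 2 hε.le (lt_of_mul_lt_mul_left hsq hσ.le)

lemma StrongConcaveOn.add_mul_sq_norm_sub_le (hh : StrongConcaveOn C σ h)
    (hM : ∀ x ∈ C, h x ≤ M) {v : ℕ → E} (hv : ∀ m, v m ∈ C)
    (hlim : Tendsto (fun m => h (v m)) atTop (𝓝 M)) {x : E} (hx : Tendsto v atTop (𝓝 x))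
    {p : E} (hp : p ∈ C) :
    h p + σ / 2 * ‖x - p‖ ^ 2 ≤ M := by
  -- compare `p` with `a • v m + (1 - a) • p`, let `m → ∞`, divide by `1 - a`, then let `a → 1`
  have hpartial : ∀ a ∈ Ioo (0 : ℝ) 1, h p + a * (σ / 2) * ‖x - p‖ ^ 2 ≤ M := by
    rintro a ⟨ha0, ha1⟩
    have hm : ∀ m, a * h (v m) + (1 - a) * h p + a * (1 - a) * (σ / 2 * ‖v m - p‖ ^ 2) ≤ M := by
      intro m
      have hcomb := hh.2 (hv m) hp ha0.le (sub_nonneg.2 ha1.le) (add_sub_cancel a 1)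
      simp only [smul_eq_mul] at hcomb
      exact hcomb.trans (hM _ (hh.1 (hv m) hp ha0.le (sub_nonneg.2 ha1.le) (add_sub_cancel a 1)))
    have hlim' := le_of_tendsto' (((hlim.const_mul a).add_const _).add
      ((((hx.sub_const p).norm.pow 2).const_mul (σ / 2)).const_mul (a * (1 - a)))) hm
    nlinarith
  have hlim1 : Tendsto (fun a => h p + a * (σ / 2) * ‖x - p‖ ^ 2) (𝓝[<] 1)
      (𝓝 (h p + 1 * (σ / 2) * ‖x - p‖ ^ 2)) :=
    (Continuous.tendsto (by fun_prop) 1).mono_left nhdsWithin_le_nhds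
  simpa [mul_comm] using
    le_of_tendsto hlim1 (eventually_of_mem (Ioo_mem_nhdsLT zero_lt_one) hpartial)

end StrongConcave

def bregmanDiv (F : E → ℝ) (F' : E → E) (z w : E) : ℝ :=
  F z - F w - ⟪F' w, z - w⟫

lemma bregmanDiv_sub_bregmanDiv_le {F : E → ℝ} {g : E → E} {σ τ : ℝ} {z z' v : E}
    (hz' : z' = z - τ • v) (hD : σ / 2 * ‖g z - g z'‖ ^ 2 ≤ bregmanDiv F g z z') (w : E) :
    bregmanDiv F g z' w - bregmanDiv F g z w ≤ τ * ⟪v, g w - g z'⟫ - σ / 2 * ‖g z' - g z‖ ^ 2 := by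
  subst hz'
  simp only [bregmanDiv, sub_sub_cancel, inner_sub_right, real_inner_smul_right,
    real_inner_comm v, norm_sub_rev (g (z - τ • v))] at hD ⊢
  linarith

section Gradient

variable [CompleteSpace E]

lemma HasGradientAt.hasDerivAt_comp_add_smul {F : E → ℝ} {G p e : E} {t : ℝ}
    (h : HasGradientAt F G (p + t • e)) :
    HasDerivAt (fun τ : ℝ => F (p + τ • e)) ⟪G, e⟫ t := by
  have hline : HasDerivAt (fun τ : ℝ => p + τ • e) e t := by
    simpa using ((hasDerivAt_id t).smul_const e).const_add p
  simpa [Function.comp_def] using h.hasFDerivAt.comp_hasDerivAt t hline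

lemma ConvexOn.add_inner_gradient_le {f : E → ℝ} {f' : E → E} (hf : ConvexOn ℝ univ f)
    (hfd : ∀ x, HasGradientAt f (f' x) x) (a b : E) :
    f a + ⟪f' a, b - a⟫ ≤ f b := by
  have hline : ConvexOn ℝ univ fun t : ℝ => f (a + t • (b - a)) := by
    simpa [Function.comp_def, AffineMap.lineMap_apply_module', add_comm]
      using hf.comp_affineMap (AffineMap.lineMap a b)
  have hderiv : HasDerivAt (fun t : ℝ => f (a + t • (b - a))) ⟪f' a, b - a⟫ 0 :=
    HasGradientAt.hasDerivAt_comp_add_smul (by simpa using hfd a)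
  have := hline.le_slope_of_hasDerivAt (mem_univ 0) (mem_univ 1) zero_lt_one hderiv
  simp [slope_def_field] at this
  linarith

lemma le_add_inner_gradient_add_sq_of_lipschitz {f : E → ℝ} {f' : E → E} {L : ℝ}
    (hfd : ∀ x, HasGradientAt f (f' x) x) (hfL : ∀ x y, ‖f' x - f' y‖ ≤ L * ‖x - y‖) (a b : E) :
    f b ≤ f a + ⟪f' a, b - a⟫ + L / 2 * ‖b - a‖ ^ 2 := by
  set e := b - a
  have hg : ∀ t : ℝ, HasDerivAt (fun τ : ℝ => f (a + τ • e)) ⟪f' (a + t • e), e⟫ t :=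
    fun t => (hfd _).hasDerivAt_comp_add_smul
  have hB : ∀ t : ℝ, HasDerivAt (fun τ : ℝ => f a + τ * ⟪f' a, e⟫ + L / 2 * ‖e‖ ^ 2 * τ ^ 2)
      (⟪f' a, e⟫ + L * ‖e‖ ^ 2 * t) t := fun t =>
    (((hasDerivAt_id t).mul_const ⟪f' a, e⟫).const_add (f a)).fun_add
      ((hasDerivAt_pow 2 t).const_mul (L / 2 * ‖e‖ ^ 2)) |>.congr_deriv (by simp; ring)
  have hbound : ∀ t ∈ Ico (0 : ℝ) 1, ⟪f' (a + t • e), e⟫ ≤ ⟪f' a, e⟫ + L * ‖e‖ ^ 2 * t := by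
    rintro t ⟨ht, -⟩
    calc ⟪f' (a + t • e), e⟫ = ⟪f' a, e⟫ + ⟪f' (a + t • e) - f' a, e⟫ := by
          rw [inner_sub_left]; ring
      _ ≤ ⟪f' a, e⟫ + L * ‖(a + t • e) - a‖ * ‖e‖ := by
          gcongr
          exact (real_inner_le_norm _ _).trans
            (mul_le_mul_of_nonneg_right (hfL _ _) (norm_nonneg _))
      _ = ⟪f' a, e⟫ + L * ‖e‖ ^ 2 * t := by
          rw [add_sub_cancel_left, norm_smul, Real.norm_of_nonneg ht]; ring
  have key := image_le_of_deriv_right_le_deriv_boundary (a := 0) (b := 1)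
    (fun t _ => (hg t).continuousAt.continuousWithinAt) (fun t _ => (hg t).hasDerivWithinAt)
    (by simp) (fun t _ => (hB t).continuousAt.continuousWithinAt)
    (fun t _ => (hB t).hasDerivWithinAt) hbound (right_mem_Icc.2 zero_le_one)
  simpa [e] using key

lemma IsMinOn.inner_gradient_sub_nonneg {h : E → ℝ} {C : Set E} (hC : Convex ℝ C) {y G w : E}
    (hmin : IsMinOn h C y) (hy : y ∈ C) (hG : HasGradientAt h G y) (hw : w ∈ C) :
    0 ≤ ⟪G, w - y⟫ := by
  simpa using hmin.localize.hasFDerivWithinAt_nonneg hG.hasFDerivAt.hasFDerivWithinAt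
    (sub_mem_posTangentConeAt_of_segment_subset (hC.segment_subset hy hw))

lemma HasGradientAt.eq_of_forall_add_inner_le {F : E → ℝ} {g u p : E}
    (hg : HasGradientAt F g u) (hp : ∀ w, F u + ⟪p, w - u⟫ ≤ F w) : g = p := by
  have hmin : IsMinOn (fun w => F w - ⟪p, w⟫) univ u := fun w _ => by
    have := hp w
    rw [inner_sub_right] at this
    show F u - ⟪p, u⟫ ≤ F w - ⟪p, w⟫
    linarith
  have hgrad : HasGradientAt (fun w => F w - ⟪p, w⟫) (g - p) u := by
    rw [hasGradientAt_iff_hasFDerivAt]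
    refine (hg.hasFDerivAt.fun_sub (innerSL ℝ p).hasFDerivAt).congr_fderiv ?_
    ext v
    simp
  have := hmin.inner_gradient_sub_nonneg convex_univ (mem_univ u) hgrad (mem_univ (u - (g - p)))
  rw [sub_sub_cancel_left, inner_neg_right, neg_nonneg, real_inner_self_nonpos] at this
  exact sub_eq_zero.1 this

lemma hasGradientAt_inner_add_half_sq_norm_sub (s : ℝ) (g x y : E) :
    HasGradientAt (fun w => s * ⟪g, w⟫ + 1 / 2 * ‖w - x‖ ^ 2) (s • g + (y - x)) y := by
  rw [hasGradientAt_iff_hasFDerivAt]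
  have h1 := ((innerSL ℝ g).hasFDerivAt (x := y)).const_mul s
  have h2 := ((hasFDerivAt_id y).sub_const x).norm_sq.const_mul (1 / 2 : ℝ)
  refine (h1.fun_add h2).congr_fderiv ?_
  ext v
  simp

lemma nesterov_step_le {C : Set E} (hC : Convex ℝ C) {f : E → ℝ} {f' : E → E} {L s k : ℝ}
    (hfconv : ConvexOn ℝ univ f) (hfd : ∀ x, HasGradientAt f (f' x) x)
    (hfL : ∀ x y, ‖f' x - f' y‖ ≤ L * ‖x - y‖) (hs : 0 ≤ s) (hk : 0 ≤ k)
    {x y y' p p' x₀ : E} (hx : x = (k / (k + 2)) • y + (2 / (k + 2)) • p)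
    (hy : y ∈ C) (hp' : p' ∈ C) (hy'C : y' ∈ C)
    (hy' : IsMinOn (fun w => s * ⟪f' x, w⟫ + 1 / 2 * ‖w - x‖ ^ 2) C y') :
    (k + 1) * (k + 2) * s * (f y' - f x₀) - k * (k + 1) * s * (f y - f x₀)
        + 2 * (k + 1) * s * ⟪f' x, x₀ - p'⟫ - 2 * ‖p' - p‖ ^ 2
      ≤ -((k + 1) * (k + 2) * (1 - L * s) / 2) * ‖y' - x‖ ^ 2 := by
  have hdesc := le_add_inner_gradient_add_sq_of_lipschitz hfd hfL x y'
  have hconv_y := hfconv.add_inner_gradient_le hfd x y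
  have hconv_x₀ := hfconv.add_inner_gradient_le hfd x x₀
  have hcoupling : k * ⟪f' x, y - x⟫ = 2 * ⟪f' x, x - p⟫ := by
    rw [← real_inner_smul_right, ← real_inner_smul_right]
    congr 1
    rw [hx]; match_scalars <;> field_simp <;> ring
  have hsplit : ⟪f' x, x₀ - p'⟫ = ⟪f' x, x₀ - x⟫ + ⟪f' x, x - p⟫ - ⟪f' x, p' - p⟫ := by
    simp only [inner_sub_right]; ring
  -- test the optimality of `y'` at `x` with `p` replaced by `p'`
  have hu : (k / (k + 2)) • y + (2 / (k + 2)) • p' ∈ C :=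
    hC hy hp' (by positivity) (by positivity) (by field_simp)
  have hvi := hy'.inner_gradient_sub_nonneg hC hy'C
    (hasGradientAt_inner_add_half_sq_norm_sub s (f' x) x y') hu
  have hvi' : 0 ≤ 2 * s * ⟪f' x, p' - p⟫ + 2 * ⟪y' - x, p' - p⟫
      - (k + 2) * s * ⟪f' x, y' - x⟫ - (k + 2) * ‖y' - x‖ ^ 2 := by
    have hdir : (k + 2) • ((k / (k + 2)) • y + (2 / (k + 2)) • p' - y')
        = (2 : ℝ) • (p' - p) - (k + 2) • (y' - x) := by
      rw [hx]; match_scalars <;> field_simp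
      ring
    have := mul_nonneg (by positivity : (0 : ℝ) ≤ k + 2) hvi
    rw [← real_inner_smul_right, hdir] at this
    set d := y' - x
    set Δ := p' - p
    simp only [inner_add_left, inner_sub_right, real_inner_smul_left, real_inner_smul_right,
      real_inner_self_eq_norm_sq] at this
    linarith
  have hyoung : 2 * (k + 1) * ⟪y' - x, p' - p⟫
      ≤ (k + 1) ^ 2 / 2 * ‖y' - x‖ ^ 2 + 2 * ‖p' - p‖ ^ 2 := by
    have hcs := real_inner_le_norm (y' - x) (p' - p)
    nlinarith [sq_nonneg ((k + 1) * ‖y' - x‖ - 2 * ‖p' - p‖)]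
  linear_combination (k + 1) * (k + 2) * s * hdesc + k * (k + 1) * s * hconv_y
    + 2 * (k + 1) * s * hconv_x₀ + (k + 1) * hvi' + hyoung - (k + 1) * s * hcoupling
    + 2 * (k + 1) * s * hsplit + (k + 1) / 2 * sq_nonneg ‖y' - x‖

end Gradient

section Conjugate

variable {C : Set E} {σ : ℝ} {φ : E → ℝ}

lemma StrongConvexOn.strongConcaveOn_inner_sub (hφ : StrongConvexOn C σ φ) (u : E) :
    StrongConcaveOn C σ fun x => ⟪u, x⟫ - φ x := by
  refine ⟨hφ.1, fun x hx y hy a b ha hb hab => ?_⟩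
  have := hφ.2 hx hy ha hb hab
  simp only [smul_eq_mul, inner_add_right, real_inner_smul_right] at this ⊢
  linarith

lemma StrongConvexOn.bddAbove_image_inner_sub (hφ : StrongConvexOn C σ φ) (hσ : 0 < σ)
    {u₀ : E} (h₀ : BddAbove ((fun x => ⟪u₀, x⟫ - φ x) '' C)) (u : E) :
    BddAbove ((fun x => ⟪u, x⟫ - φ x) '' C) := by
  rcases C.eq_empty_or_nonempty with rfl | ⟨x₀, hx₀⟩
  · simp
  obtain ⟨M, hM⟩ := h₀
  have hM' : ∀ x ∈ C, ⟪u₀, x⟫ - φ x ≤ M := fun x hx => hM (mem_image_of_mem _ hx)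
  refine ⟨2 * M - (⟪u₀, x₀⟫ - φ x₀) + ⟪u - u₀, x₀⟫ + ‖u - u₀‖ ^ 2 / σ, ?_⟩
  rintro _ ⟨x, hx, rfl⟩
  -- quadratic decay of `x ↦ ⟪u₀, x⟫ - φ x` beats the linear growth of `⟪u - u₀, x⟫`
  have hdecay := (hφ.strongConcaveOn_inner_sub u₀).mul_sq_norm_sub_le hM' hx hx₀
  have hcs := real_inner_le_norm (u - u₀) (x - x₀)
  have hyoung : ‖u - u₀‖ * ‖x - x₀‖ ≤ σ / 4 * ‖x - x₀‖ ^ 2 + ‖u - u₀‖ ^ 2 / σ := by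
    have hsq : σ / 4 * ‖x - x₀‖ ^ 2 + ‖u - u₀‖ ^ 2 / σ - ‖u - u₀‖ * ‖x - x₀‖
        = (σ / 2 * ‖x - x₀‖ - ‖u - u₀‖) ^ 2 / σ := by
      field_simp; ring
    linarith [div_nonneg (sq_nonneg (σ / 2 * ‖x - x₀‖ - ‖u - u₀‖)) hσ.le]
  simp only [inner_sub_left, inner_sub_right] at hcs ⊢
  linarith

variable [CompleteSpace E]

lemma tendsto_gradient_of_isLUB (hφ : StrongConvexOn C σ φ) (hσ : 0 < σ) {F : E → ℝ}
    (hF : ∀ u, IsLUB ((fun x => ⟪u, x⟫ - φ x) '' C) (F u)) {u G : E} (hG : HasGradientAt F G u)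
    {v : ℕ → E} (hv : ∀ m, v m ∈ C)
    (hlim : Tendsto (fun m => ⟪u, v m⟫ - φ (v m)) atTop (𝓝 (F u))) :
    Tendsto v atTop (𝓝 G) := by
  have hle : ∀ w, ∀ x ∈ C, ⟪w, x⟫ - φ x ≤ F w := fun w x hx => (hF w).1 (mem_image_of_mem _ hx)
  obtain ⟨x, hx⟩ := cauchySeq_tendsto_of_complete
    ((hφ.strongConcaveOn_inner_sub u).cauchySeq_of_tendsto hσ (hle u) hv hlim)
  -- the limit is a subgradient of `F` at `u`, hence the gradient
  suffices G = x by rwa [this]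
  refine hG.eq_of_forall_add_inner_le fun w =>
    le_of_tendsto' (hlim.add (hx.inner tendsto_const_nhds)) fun m => ?_
  have := hle w (v m) (hv m)
  rw [inner_sub_right, real_inner_comm w, real_inner_comm u]
  linarith

lemma add_mul_sq_norm_sub_le_of_isLUB (hφ : StrongConvexOn C σ φ) (hσ : 0 < σ) {F : E → ℝ}
    (hF : ∀ u, IsLUB ((fun x => ⟪u, x⟫ - φ x) '' C) (F u)) {u G : E} (hG : HasGradientAt F G u)
    {p : E} (hp : p ∈ C) :
    ⟪u, p⟫ - φ p + σ / 2 * ‖G - p‖ ^ 2 ≤ F u := by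
  obtain ⟨v, hv, hlim⟩ := exists_seq_tendsto_of_isLUB_image (hF u) ⟨p, hp⟩
  exact (hφ.strongConcaveOn_inner_sub u).add_mul_sq_norm_sub_le
    (fun x hx => (hF u).1 (mem_image_of_mem _ hx)) hv hlim
    (tendsto_gradient_of_isLUB hφ hσ hF hG hv hlim) hp

lemma half_mul_sq_norm_sub_le_bregmanDiv_of_isLUB (hφ : StrongConvexOn C σ φ) (hσ : 0 < σ)
    (hC : C.Nonempty) {F : E → ℝ} (hF : ∀ u, IsLUB ((fun x => ⟪u, x⟫ - φ x) '' C) (F u))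
    {g : E → E} (hg : ∀ u, HasGradientAt F (g u) u) (z w : E) :
    σ / 2 * ‖g z - g w‖ ^ 2 ≤ bregmanDiv F g z w := by
  obtain ⟨v, hv, hlim⟩ := exists_seq_tendsto_of_isLUB_image (hF w) hC
  have hvg := tendsto_gradient_of_isLUB hφ hσ hF (hg w) hv hlim
  have hm : ∀ m, ⟪w, v m⟫ - φ (v m) + ⟪z - w, v m⟫ + σ / 2 * ‖g z - v m‖ ^ 2 ≤ F z := fun m => by
    have := add_mul_sq_norm_sub_le_of_isLUB hφ hσ hF (hg z) (hv m)
    rw [inner_sub_left]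
    linarith
  have := le_of_tendsto' ((hlim.add (tendsto_const_nhds.inner hvg)).add
    (((tendsto_const_nhds.sub hvg).norm.pow 2).const_mul _)) hm
  rw [bregmanDiv, real_inner_comm]
  linarith

end Conjugate

lemma StrongConvexOn.half_mul_sq_norm_sub_le_bregmanDiv_fenchelConjOn {n : ℕ}
    {C : Set (EuclideanSpace ℝ (Fin n))} {σ : ℝ} {φ : EuclideanSpace ℝ (Fin n) → ℝ}
    (hφ : StrongConvexOn C σ φ) (hσ : 0 < σ) (hC : C.Nonempty)
    {g : EuclideanSpace ℝ (Fin n) → EuclideanSpace ℝ (Fin n)}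
    (hg : ∀ u, HasGradientAt (fenchelConjOn C φ) (g u) u) (z w : EuclideanSpace ℝ (Fin n)) :
    σ / 2 * ‖g z - g w‖ ^ 2 ≤ bregmanDiv (fenchelConjOn C φ) g z w := by
  by_cases hbdd : ∃ u₀, BddAbove ((fun x => ⟪u₀, x⟫ - φ x) '' C)
  · obtain ⟨u₀, h₀⟩ := hbdd
    have : Nonempty C := hC.to_subtype
    refine half_mul_sq_norm_sub_le_bregmanDiv_of_isLUB hφ hσ hC (fun u => ?_) hg z w
    have hu := hφ.bddAbove_image_inner_sub hσ h₀ u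
    rw [image_eq_range] at hu ⊢
    exact isLUB_ciSup hu
  · -- junk case: `fenchelConjOn C φ` is the `0` of an unbounded `⨆`
    have hF : fenchelConjOn C φ = fun _ => 0 := funext fun u =>
      Real.iSup_of_not_bddAbove (by simpa [image_eq_range] using not_exists.1 hbdd u)
    have hg0 : ∀ u, g u = 0 := fun u => (hg u).unique (hF ▸ hasGradientAt_const u 0)
    simp [bregmanDiv, hF, hg0]

lemma nesterov_coupling_eq {V : Type*} [AddCommGroup V] [Module ℝ V] {x y w : ℕ → V}
    (hx : ∀ k : ℕ, x (k + 1) =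
      (((k : ℝ) + 1) / ((k : ℝ) + 3)) • y (k + 1) + (2 / ((k : ℝ) + 3)) • w (k + 1))
    (hx0 : x 0 = w 0) (k : ℕ) :
    x k = ((k : ℝ) / ((k : ℝ) + 2)) • y k + (2 / ((k : ℝ) + 2)) • w k := by
  rcases k with _ | k
  · simp [hx0]
  · rw [hx k]
    push_cast
    ring_nf

theorem nesterov_mirror_descent_lyapunov_difference_general
{n : ℕ} (C : Set (EuclideanSpace ℝ (Fin n)))
    (hCconv : Convex ℝ C)
    (f φ : EuclideanSpace ℝ (Fin n) → ℝ)
    (f' gφs : EuclideanSpace ℝ (Fin n) → EuclideanSpace ℝ (Fin n))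
    (σ L s : ℝ) (hσ : 0 < σ)
    -- f is convex and differentiable with L-Lipschitz gradient
    (hfconv : ConvexOn ℝ Set.univ f)
    (hfd : ∀ x, HasGradientAt f (f' x) x)
    (hfL : ∀ x y, ‖f' x - f' y‖ ≤ L * ‖x - y‖)
    -- φ is σ-strongly convex on C
    (hφsc : StrongConvexOn C σ φ)
    -- φ* is differentiable with gradient gφs, taking values in C
    (hgφs : ∀ z, HasGradientAt (fenchelConjOn C φ) (gφs z) z)
    (hgφsC : ∀ z, gφs z ∈ C)
    -- Nesterov's accelerated mirror descent iteration
    (x y z : ℕ → EuclideanSpace ℝ (Fin n))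
    (hz : ∀ k : ℕ, z (k + 1) = z k - ((((k : ℝ) + 1) * σ * s) / 2) • f' (x k))
    (hy : ∀ k : ℕ, y (k + 1) ∈ C ∧ ∀ w ∈ C,
      s * ⟪f' (x k), y (k + 1)⟫ + (1 / 2) * ‖y (k + 1) - x k‖ ^ 2 ≤
        s * ⟪f' (x k), w⟫ + (1 / 2) * ‖w - x k‖ ^ 2)
    (hx : ∀ k : ℕ, x (k + 1) =
      ((((k : ℝ) + 1)) / ((k : ℝ) + 3)) • y (k + 1) + (2 / ((k : ℝ) + 3)) • gφs (z (k + 1)))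
    (hx0 : x 0 = gφs (z 0)) (hy0 : y 0 = x 0)
    -- x* is a minimizer of f over C and ∇φ*(z*) = x*
    (xs zs : EuclideanSpace ℝ (Fin n))
    (hzs : gφs zs = xs)
    (hs : 0 < s) :
    ∀ k : ℕ,
      ((((k : ℝ) + 1) * ((k : ℝ) + 2)) * σ * s * (f (y (k + 1)) - f xs) +
          4 * (fenchelConjOn C φ (z (k + 1)) - fenchelConjOn C φ zs -
            ⟪gφs zs, z (k + 1) - zs⟫)) -
        (((k : ℝ) * ((k : ℝ) + 1)) * σ * s * (f (y k) - f xs) +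
          4 * (fenchelConjOn C φ (z k) - fenchelConjOn C φ zs - ⟪gφs zs, z k - zs⟫))
        ≤ -((((k : ℝ) + 1) * ((k : ℝ) + 2) * (1 - L * s) * σ) / 2) * ‖y (k + 1) - x k‖ ^ 2 := by
  intro k
  have hyC : ∀ j, y j ∈ C := by
    rintro (_ | j)
    · rw [hy0, hx0]; exact hgφsC _
    · exact (hy j).1
  have hstep := nesterov_step_le (x₀ := xs) hCconv hfconv hfd hfL hs.le k.cast_nonneg
    (nesterov_coupling_eq (w := fun j => gφs (z j)) hx hx0 k) (hyC k) (hgφsC (z (k + 1)))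
    (hyC (k + 1)) (isMinOn_iff.2 (hy k).2)
  have hbreg := bregmanDiv_sub_bregmanDiv_le (hz k)
    (hφsc.half_mul_sq_norm_sub_le_bregmanDiv_fenchelConjOn hσ ⟨_, hgφsC 0⟩ hgφs
      (z k) (z (k + 1))) zs
  rw [hzs] at hbreg
  simp only [bregmanDiv] at hbreg
  linear_combination σ * hstep + 4 * hbreg

/-- For Nesterov's accelerated mirror descent, the Lyapunov function
`E(k) = k(k+1)σs[f(y_k) − f(x*)] + 4D_{φ*}(z_k, z*)` satisfies
`E(k+1) − E(k) ≤ −((k+1)(k+2)(1 − Ls)σ/2)‖y_{k+1} − x_k‖²` for every step size `s > 0`. -/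
theorem nesterov_mirror_descent_lyapunov_difference
{n : ℕ} (C : Set (EuclideanSpace ℝ (Fin n)))
    (hCconv : Convex ℝ C) (hCclosed : IsClosed C) (hCne : C.Nonempty)
    (f φ : EuclideanSpace ℝ (Fin n) → ℝ)
    (f' gφs : EuclideanSpace ℝ (Fin n) → EuclideanSpace ℝ (Fin n))
    (σ L s : ℝ) (hσ : 0 < σ)
    -- f is convex and differentiable with L-Lipschitz gradient
    (hfconv : ConvexOn ℝ Set.univ f)
    (hfd : ∀ x, HasGradientAt f (f' x) x)
    (hfL : ∀ x y, ‖f' x - f' y‖ ≤ L * ‖x - y‖)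
    -- φ is σ-strongly convex on C
    (hφsc : StrongConvexOn C σ φ)
    -- φ* is differentiable with gradient gφs, taking values in C
    (hgφs : ∀ z, HasGradientAt (fenchelConjOn C φ) (gφs z) z)
    (hgφsC : ∀ z, gφs z ∈ C)
    -- Nesterov's accelerated mirror descent iteration
    (x y z : ℕ → EuclideanSpace ℝ (Fin n))
    (hz : ∀ k : ℕ, z (k + 1) = z k - ((((k : ℝ) + 1) * σ * s) / 2) • f' (x k))
    (hy : ∀ k : ℕ, y (k + 1) ∈ C ∧ ∀ w ∈ C,
      s * ⟪f' (x k), y (k + 1)⟫ + (1 / 2) * ‖y (k + 1) - x k‖ ^ 2 ≤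
        s * ⟪f' (x k), w⟫ + (1 / 2) * ‖w - x k‖ ^ 2)
    (hx : ∀ k : ℕ, x (k + 1) =
      ((((k : ℝ) + 1)) / ((k : ℝ) + 3)) • y (k + 1) + (2 / ((k : ℝ) + 3)) • gφs (z (k + 1)))
    (hx0 : x 0 = gφs (z 0)) (hy0 : y 0 = x 0)
    -- x* is a minimizer of f over C and ∇φ*(z*) = x*
    (xs zs : EuclideanSpace ℝ (Fin n))
    (hxsC : xs ∈ C) (hxs : ∀ w ∈ C, f xs ≤ f w) (hzs : gφs zs = xs)
    (hs : 0 < s) :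
    ∀ k : ℕ,
      ((((k : ℝ) + 1) * ((k : ℝ) + 2)) * σ * s * (f (y (k + 1)) - f xs) +
          4 * (fenchelConjOn C φ (z (k + 1)) - fenchelConjOn C φ zs -
            ⟪gφs zs, z (k + 1) - zs⟫)) -
        (((k : ℝ) * ((k : ℝ) + 1)) * σ * s * (f (y k) - f xs) +
          4 * (fenchelConjOn C φ (z k) - fenchelConjOn C φ zs - ⟪gφs zs, z k - zs⟫))
        ≤ -((((k : ℝ) + 1) * ((k : ℝ) + 2) * (1 - L * s) * σ) / 2) * ‖y (k + 1) - x k‖ ^ 2 :=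
  nesterov_mirror_descent_lyapunov_difference_general C hCconv f φ f' gφs σ L s hσ hfconv hfd hfL
    hφsc hgφs hgφsC x y z hz hy hx hx0 hy0 xs zs hzs hs
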